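/- Let α ∈ (0,1), C > 0, C₀ > 0, and set δ_α = (1/4)(α/(α+1) − α/2). Suppose u satisfies: (i) u(x', h) ≤ −r^{α+δ_α} h + ((n−1)C₀/2) h² whenever ∂_y u(x',0) < −r^{α+δ_α}; (ii) u(0,h) ≥ −C h^{1+α}; (iii) u(0,h) ≤ u(x,h) + C₀ h² for all x in the convex hull of {∂_y u < −r^{α+δ_α}} whenever 0 belongs to that convex hull. Then there exists r₀ = r₀(α, C, C₀) > 0 such that for r ≤ r₀ the convex hull of {x ∈ B_r' : ∂_y u(x,0) < −r^{α+δ_α}} does not contain the origin. -/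

import Mathlib

open Metric Set MeasureTheory

noncomputable section

/-- Ambient Euclidean space `ℝⁿ × ℝ`, with `y`-variable the last coordinate. -/
abbrev E (n : ℕ) := EuclideanSpace ℝ (Fin (n + 1))

/-- The `y`-coordinate of a point. -/
def yc {n : ℕ} (x : E n) : ℝ := x (Fin.last n)

/-- Second derivative of `f` at `x` in the direction `v`. -/
def secondDeriv {n : ℕ} (f : E n → ℝ) (x v : E n) : ℝ :=
  deriv (deriv (fun t : ℝ => f (x + t • v))) 0

/-- The Laplacian of `f` at `x`, as the sum of pure second derivatives. -/
def lapl {n : ℕ} (f : E n → ℝ) (x : E n) : ℝ :=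
  ∑ i : Fin (n + 1), secondDeriv f x (EuclideanSpace.single i 1)

/-- The normal derivative `∂_y f`. -/
def derivY {n : ℕ} (f : E n → ℝ) (x : E n) : ℝ :=
  deriv (fun t : ℝ => f (x + t • EuclideanSpace.single (Fin.last n) 1)) 0

/-- The upper half-ball `B_r⁺`. -/
def upHalfBall (n : ℕ) (r : ℝ) : Set (E n) := {x | ‖x‖ < r ∧ 0 < yc x}

/-- The flat part `B_r' = B_r ∩ {y = 0}`. -/
def flatBall (n : ℕ) (r : ℝ) : Set (E n) := {x | ‖x‖ < r ∧ yc x = 0}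

/-- The upper spherical part `(∂B_r)⁺`. -/
def upSphere (n : ℕ) (r : ℝ) : Set (E n) := {x | ‖x‖ = r ∧ 0 < yc x}

/-- The model penalization `β_ε`. -/
def betaPen (ε t : ℝ) : ℝ := if t < 0 then t / ε else 0

/-- `u` solves the penalized boundary obstacle problem in `B₁` with boundary data `φ`:
harmonic in `B₁⁺`, continuous up to the boundary, Robin condition `∂_y u = β_ε(u)` on `B₁'`,
and `u = φ` on `(∂B₁)⁺`. -/
def SolvesPenalized {n : ℕ} (ε : ℝ) (φ u : E n → ℝ) : Prop :=
  (∀ x ∈ upHalfBall n 1, lapl u x = 0) ∧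
  ContinuousOn u (closure (upHalfBall n 1)) ∧
  (∀ x ∈ flatBall n 1, derivY u x = betaPen ε (u x)) ∧
  (∀ x ∈ upSphere n 1, u x = φ x)

/-!
Since the convex hull of `S r` contains `0`, `S r` has a point `x`. Chaining (ii), then (iii)
and (i) at `x`, gives `r^(α+δ) h ≤ C h^(1+α) + K h²` with `K = ((n-1)/2 + 1) C₀`, for all
`h ∈ (0,1)`. At the scale `h = r^(1+2δ/α)` all three terms are `r^B` times a power of `r`, and
dividing by `r^B` leaves `1 ≤ C r^δ + K r^(1+2δ/α-α-δ)`. Both exponents are positive for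
`0 < α < 1`, so the right side tends to `0` with `r`, a contradiction for small `r`.
-/

def almostConvexityExponent (α : ℝ) : ℝ := (1/4) * (α / (α + 1) - α / 2)

lemma almostConvexityExponent_pos {α : ℝ} (hα : 0 < α) (hα1 : α < 1) :
    0 < almostConvexityExponent α := by
  have : α / 2 < α / (α + 1) := by rw [div_lt_div_iff₀ two_pos (by linarith)]; nlinarith
  unfold almostConvexityExponent
  linarith

lemma add_almostConvexityExponent_lt_one {α : ℝ} (hα : 0 < α) (hα1 : α < 1) :
    α + almostConvexityExponent α < 1 := by
  have hδ : almostConvexityExponent α * (8 * (α + 1)) = α * (1 - α) := by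
    unfold almostConvexityExponent; field_simp; ring
  nlinarith [almostConvexityExponent_pos hα hα1]

open Filter Topology in
lemma eventually_mul_rpow_add_mul_rpow_lt_one {δ ε : ℝ} (hδ : 0 < δ) (hε : 0 < ε) (C K : ℝ) :
    ∀ᶠ r in 𝓝[>] (0 : ℝ), C * r ^ δ + K * r ^ ε < 1 := by
  have hlim : Tendsto (fun r : ℝ => C * r ^ δ + K * r ^ ε) (𝓝 0) (𝓝 0) := by
    have := (((Real.continuousAt_rpow_const 0 δ (Or.inr hδ.le)).const_mul C).tendsto).add
      (((Real.continuousAt_rpow_const 0 ε (Or.inr hε.le)).const_mul K).tendsto)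
    simpa [Real.zero_rpow hδ.ne', Real.zero_rpow hε.ne'] using this
  exact eventually_nhdsWithin_of_eventually_nhds (hlim.eventually (gt_mem_nhds one_pos))

lemma one_le_of_le_at_scale {α δ C K r : ℝ} (hα : α ≠ 0) (hr : 0 < r)
    (hle : r ^ (α + δ) * r ^ (1 + 2 * δ / α) ≤
      C * (r ^ (1 + 2 * δ / α)) ^ (1 + α) + K * (r ^ (1 + 2 * δ / α)) ^ 2) :
    1 ≤ C * r ^ δ + K * r ^ (1 + 2 * δ / α - α - δ) := by
  set B := α + δ + (1 + 2 * δ / α)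
  have hexp₁ : (1 + 2 * δ / α) * (1 + α) = B + δ := by simp only [B]; field_simp; ring
  have hexp₂ : (1 + 2 * δ / α) * ((2 : ℕ) : ℝ) = B + (1 + 2 * δ / α - α - δ) := by
    simp only [B]; push_cast; ring
  rw [← Real.rpow_add hr, ← Real.rpow_mul hr.le, ← Real.rpow_mul_natCast hr.le, hexp₁, hexp₂,
    Real.rpow_add hr B, Real.rpow_add hr B] at hle
  refine le_of_mul_le_mul_right ?_ (Real.rpow_pos_of_pos hr B)
  linarith

theorem stmt17_general (n : ℕ) (α C C₀ : ℝ) (hα : 0 < α) (hα1 : α ≤ 1/2)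
    (u : E n → ℝ)
    (dα : ℝ) (hdα : dα = (1/4) * (α / (α + 1) - α / 2))
    (S : ℝ → Set (E n))
    (h1 : ∀ r : ℝ, 0 < r → r < 1 → ∀ x ∈ S r, ∀ h : ℝ, 0 < h → h < 1 →
      u (x + h • EuclideanSpace.single (Fin.last n) 1) ≤
        -(r ^ (α + dα)) * h + ((n : ℝ) - 1) * C₀ / 2 * h ^ 2)
    (h2 : ∀ h : ℝ, 0 < h → h < 1 →
      -(C * h ^ (1 + α)) ≤ u (h • EuclideanSpace.single (Fin.last n) 1))
    (h3 : ∀ r : ℝ, 0 < r → r < 1 → (0 : E n) ∈ convexHull ℝ (S r) →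
      ∀ x ∈ convexHull ℝ (S r), ∀ h : ℝ, 0 < h → h < 1 →
        u (h • EuclideanSpace.single (Fin.last n) 1) ≤
          u (x + h • EuclideanSpace.single (Fin.last n) 1) + C₀ * h ^ 2) :
    ∃ r₀ : ℝ, 0 < r₀ ∧ ∀ r : ℝ, 0 < r → r ≤ r₀ → (0 : E n) ∉ convexHull ℝ (S r) := by
  have hα1' : α < 1 := by linarith
  have hdα_pos : 0 < dα := hdα ▸ almostConvexityExponent_pos hα hα1'
  have he_pos : 0 < 1 + 2 * dα / α - α - dα := by
    have : α + dα < 1 := hdα ▸ add_almostConvexityExponent_lt_one hα hα1'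
    have : 0 ≤ 2 * dα / α := by positivity
    linarith
  obtain ⟨r₀, hr₀, hsmall⟩ := mem_nhdsGT_iff_exists_Ioc_subset.mp
    ((eventually_nhdsWithin_of_eventually_nhds (gt_mem_nhds one_pos)).and
      (eventually_mul_rpow_add_mul_rpow_lt_one hdα_pos he_pos C (((n : ℝ) - 1) / 2 * C₀ + C₀)))
  refine ⟨r₀, hr₀, fun r hr hrr₀ hhull => ?_⟩
  obtain ⟨hr1, hlt⟩ := hsmall ⟨hr, hrr₀⟩
  obtain ⟨x, hx⟩ := convexHull_nonempty_iff.mp ⟨0, hhull⟩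
  set h := r ^ (1 + 2 * dα / α)
  have hh0 : 0 < h := Real.rpow_pos_of_pos hr _
  have hh1 : h < 1 := Real.rpow_lt_one hr.le hr1 (by positivity)
  have key : r ^ (α + dα) * h ≤ C * h ^ (1 + α) + (((n : ℝ) - 1) / 2 * C₀ + C₀) * h ^ 2 := by
    linarith [h1 r hr hr1 x hx h hh0 hh1, h2 h hh0 hh1,
      h3 r hr hr1 hhull x (subset_convexHull ℝ _ hx) h hh0 hh1]
  exact (one_le_of_le_at_scale hα.ne' hr key).not_gt hlt

/-- Lemma 8 (almost convexity): with `δ_α = (1/4)(α/(α+1) − α/2)`, under the three growth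
hypotheses (i)–(iii) there is `r₀ = r₀(α, C, C₀) > 0` such that for `r ≤ r₀` the convex hull
of `{x ∈ B_r' : ∂_y u(x,0) < −r^{α+δ_α}}` does not contain the origin. -/
theorem stmt17 (n : ℕ) (α C C₀ : ℝ) (hα : 0 < α) (hα1 : α ≤ 1/2) (hC : 0 < C) (hC₀ : 0 < C₀)
    (u : E n → ℝ)
    (dα : ℝ) (hdα : dα = (1/4) * (α / (α + 1) - α / 2))
    (S : ℝ → Set (E n)) (hS : S = fun r => {x : E n | x ∈ flatBall n r ∧ derivY u x < -(r ^ (α + dα))})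
    (h1 : ∀ r : ℝ, 0 < r → r < 1 → ∀ x ∈ S r, ∀ h : ℝ, 0 < h → h < 1 →
      u (x + h • EuclideanSpace.single (Fin.last n) 1) ≤
        -(r ^ (α + dα)) * h + ((n : ℝ) - 1) * C₀ / 2 * h ^ 2)
    (h2 : ∀ h : ℝ, 0 < h → h < 1 →
      -(C * h ^ (1 + α)) ≤ u (h • EuclideanSpace.single (Fin.last n) 1))
    (h3 : ∀ r : ℝ, 0 < r → r < 1 → (0 : E n) ∈ convexHull ℝ (S r) →
      ∀ x ∈ convexHull ℝ (S r), ∀ h : ℝ, 0 < h → h < 1 →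
        u (h • EuclideanSpace.single (Fin.last n) 1) ≤
          u (x + h • EuclideanSpace.single (Fin.last n) 1) + C₀ * h ^ 2) :
    ∃ r₀ : ℝ, 0 < r₀ ∧ ∀ r : ℝ, 0 < r → r ≤ r₀ → (0 : E n) ∉ convexHull ℝ (S r) :=
  stmt17_general n α C C₀ hα hα1 u dα hdα S h1 h2 h3
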